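/- Let k be a field of characteristic zero, λ ∈ k with λ ≠ 0 and λ ≠ −1, R̂ = k[[x,y]]/⟨y² − x² − x³⟩, and M̂ = k[[x,y]]/⟨(1+λ)y − (1−λ)x, x²⟩ viewed as an R̂-module. With ξ = x√(1+x) − y and η = x√(1+x) + y, we have λη − ξ = 0 in M̂, and M̂ ≅ R̂/⟨λη − ξ⟩ as R̂-modules. -/

import Mathlib

open MvPowerSeries

/-- The ideal `⟨y² − x² − x³⟩` in `k[[x,y]]`, where `x = X 0`, `y = X 1`. -/
noncomputable def nodalIdeal (k : Type) [Field k] : Ideal (MvPowerSeries (Fin 2) k) :=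
  Ideal.span {(X 1 : MvPowerSeries (Fin 2) k) ^ 2 - X 0 ^ 2 - X 0 ^ 3}

/-- The ideal `⟨(1+λ)y − (1−λ)x, x²⟩` in `k[[x,y]]`. -/
noncomputable def lamIdeal (k : Type) [Field k] (lam : k) : Ideal (MvPowerSeries (Fin 2) k) :=
  Ideal.span {C (σ := Fin 2) (R := k) (1 + lam) * X 1 - C (σ := Fin 2) (R := k) (1 - lam) * X 0,
    (X 0 : MvPowerSeries (Fin 2) k) ^ 2}

/-- `R̂ = k[[x,y]]/⟨y² − x² − x³⟩`. -/
noncomputable abbrev Rhat (k : Type) [Field k] : Type :=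
  MvPowerSeries (Fin 2) k ⧸ nodalIdeal k

/-- `M̂ = k[[x,y]]/⟨(1+λ)y − (1−λ)x, x²⟩`. -/
noncomputable abbrev Mlam (k : Type) [Field k] (lam : k) : Type :=
  MvPowerSeries (Fin 2) k ⧸ lamIdeal k lam

lemma nodalIdeal_le_lamIdeal (k : Type) [Field k] (lam : k) (hlam : lam ≠ -1) :
    nodalIdeal k ≤ lamIdeal k lam := by
  have ha : (1 : k) + lam ≠ 0 := fun h => hlam (by linear_combination h)
  rw [nodalIdeal, Ideal.span_le, Set.singleton_subset_iff, SetLike.mem_coe, lamIdeal,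
    Ideal.mem_span_pair]
  refine ⟨C (σ := Fin 2) (R := k) (1 + lam)⁻¹ * X 1 + C (σ := Fin 2) (R := k) ((1 - lam) * ((1 + lam)⁻¹) ^ 2) * X 0,
    C (σ := Fin 2) (R := k) ((1 - lam) ^ 2 * ((1 + lam)⁻¹) ^ 2) - 1 - X 0, ?_⟩
  have h1 : C (σ := Fin 2) (R := k) (1 + lam) * C (σ := Fin 2) (R := k) (1 + lam)⁻¹ = 1 := by
    rw [← map_mul, mul_inv_cancel₀ ha, map_one]
  simp only [map_mul, map_pow]
  linear_combination (((X 1 : MvPowerSeries (Fin 2) k)) ^ 2 +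
    C (σ := Fin 2) (R := k) (1 - lam) * C (σ := Fin 2) (R := k) (1 + lam)⁻¹ * X 0 * X 1) * h1

/-- `M̂` is an `R̂`-module via the natural surjection `R̂ → M̂`. -/
noncomputable def lamModule (k : Type) [Field k] (lam : k) (hlam : lam ≠ -1) :
    Module (Rhat k) (Mlam k lam) :=
  Module.compHom _ (Ideal.Quotient.factor (S := nodalIdeal k) (T := lamIdeal k lam)
    (nodalIdeal_le_lamIdeal k lam hlam))

theorem Mlam_band_module (k : Type) [Field k] [CharZero k] (lam : k)
    (hlam0 : lam ≠ 0) (hlam1 : lam ≠ -1)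
    (u : MvPowerSeries (Fin 2) k) (hu1 : constantCoeff (σ := Fin 2) (R := k) u = 1)
    (hu2 : u ^ 2 = 1 + X 0) :
    Ideal.Quotient.mk (lamIdeal k lam)
        (C (σ := Fin 2) (R := k) lam * (X 0 * u + X 1) - (X 0 * u - X 1)) = 0 ∧
      (letI := lamModule k lam hlam1
       Nonempty (Mlam k lam ≃ₗ[Rhat k]
          (Rhat k ⧸ (Ideal.span {Ideal.Quotient.mk (nodalIdeal k)
            (C (σ := Fin 2) (R := k) lam * (X 0 * u + X 1) - (X 0 * u - X 1))} : Ideal (Rhat k))))) := by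
  set f : MvPowerSeries (Fin 2) k :=
    C (σ := Fin 2) (R := k) lam * (X 0 * u + X 1) - (X 0 * u - X 1) with hfdef
  -- unit w : inverse of (u+1)
  have hw_unit : IsUnit (u + 1) := by
    rw [MvPowerSeries.isUnit_iff_constantCoeff]
    simp only [map_add, map_one, hu1]
    exact isUnit_iff_ne_zero.mpr (by norm_num)
  obtain ⟨w, hw⟩ : ∃ w, (u + 1) * w = 1 := by
    obtain ⟨v, hv⟩ := hw_unit
    exact ⟨(v⁻¹ : _), by rw [← hv]; exact v.mul_inv⟩
  have husub : u - 1 = X 0 * w := by linear_combination w * hu2 + (1 - u) * hw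
  -- unit w2 : inverse of 4 λ u²
  have hw2_unit : IsUnit (4 * C (σ := Fin 2) (R := k) lam * u ^ 2) := by
    rw [MvPowerSeries.isUnit_iff_constantCoeff]
    simp only [map_mul, map_pow, hu1, constantCoeff_C, map_ofNat, one_pow, mul_one]
    exact isUnit_iff_ne_zero.mpr (mul_ne_zero (by norm_num) hlam0)
  obtain ⟨w2, hw2⟩ : ∃ w2, (4 * C (σ := Fin 2) (R := k) lam * u ^ 2) * w2 = 1 := by
    obtain ⟨v, hv⟩ := hw2_unit
    exact ⟨(v⁻¹ : _), by rw [← hv]; exact v.mul_inv⟩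
  have hCsum : C (σ := Fin 2) (R := k) (1 + lam) = 1 + C (σ := Fin 2) (R := k) lam := by
    rw [map_add, map_one]
  have hCdiff : C (σ := Fin 2) (R := k) (1 - lam) = 1 - C (σ := Fin 2) (R := k) lam := by
    rw [map_sub, map_one]
  -- f ∈ lamIdeal
  have hfJ : f ∈ lamIdeal k lam := by
    rw [lamIdeal, Ideal.mem_span_pair]
    refine ⟨1, -(C (σ := Fin 2) (R := k) (1 - lam) * w), ?_⟩
    rw [hCsum, hCdiff, hfdef]
    linear_combination (1 - C (σ := Fin 2) (R := k) lam) * X 0 * husub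
  -- x² ∈ nodalIdeal ⊔ span {f}
  set n : MvPowerSeries (Fin 2) k := (X 1 : MvPowerSeries (Fin 2) k) ^ 2 - X 0 ^ 2 - X 0 ^ 3
    with hndef
  have hx2eq : (X 0 : MvPowerSeries (Fin 2) k) ^ 2 =
      (-(1 + C (σ := Fin 2) (R := k) lam) ^ 2 * w2) * n
        + (((X 0 * u + X 1) - C (σ := Fin 2) (R := k) lam * (X 0 * u - X 1)) * w2) * f := by
    rw [hfdef, hndef]
    linear_combination (-(X 0 : MvPowerSeries (Fin 2) k) ^ 2) * hw2
      + w2 * (1 + C (σ := Fin 2) (R := k) lam) ^ 2 * (X 0 : MvPowerSeries (Fin 2) k) ^ 2 * hu2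
  have hx2mem : (X 0 : MvPowerSeries (Fin 2) k) ^ 2 ∈ nodalIdeal k ⊔ Ideal.span {f} := by
    rw [hx2eq]
    refine Submodule.add_mem_sup ?_ ?_
    · exact Ideal.mul_mem_left _ _ (Ideal.subset_span (Set.mem_singleton _))
    · exact Ideal.mul_mem_left _ _ (Ideal.subset_span (Set.mem_singleton _))
  -- lamIdeal = nodalIdeal ⊔ span {f}
  have hJeq : lamIdeal k lam = nodalIdeal k ⊔ Ideal.span {f} := by
    apply le_antisymm
    · rw [lamIdeal, Ideal.span_le]
      rintro z hz
      rcases hz with hz | hz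
      · -- z = g
        subst hz
        have hgeq : C (σ := Fin 2) (R := k) (1 + lam) * X 1 - C (σ := Fin 2) (R := k) (1 - lam) * X 0 =
            f + (C (σ := Fin 2) (R := k) (1 - lam) * w) * X 0 ^ 2 := by
          rw [hCsum, hCdiff, hfdef]
          linear_combination (1 - C (σ := Fin 2) (R := k) lam) * X 0 * husub
        rw [SetLike.mem_coe, hgeq]
        exact add_mem (Ideal.mem_sup_right (Ideal.subset_span (Set.mem_singleton _)))
          (Ideal.mul_mem_left _ _ hx2mem)
      · simp only [Set.mem_singleton_iff] at hz
        subst hz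
        exact hx2mem
    · refine sup_le (nodalIdeal_le_lamIdeal k lam hlam1) ?_
      rw [Ideal.span_le, Set.singleton_subset_iff]
      exact hfJ
  refine ⟨Ideal.Quotient.eq_zero_iff_mem.mpr hfJ, ?_⟩
  letI := lamModule k lam hlam1
  set N : Ideal (Rhat k) := Ideal.span {Ideal.Quotient.mk (nodalIdeal k) f} with hNdef
  have himg : Ideal.map (Ideal.Quotient.mk (nodalIdeal k)) (lamIdeal k lam) = N := by
    rw [hJeq, Ideal.map_sup, Ideal.map_quotient_self, bot_sup_eq, Ideal.map_span,
      Set.image_singleton]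
  have hker : ∀ a ∈ lamIdeal k lam,
      (Ideal.Quotient.mk N) (Ideal.Quotient.mk (nodalIdeal k) a) = 0 := by
    intro a ha
    rw [Ideal.Quotient.eq_zero_iff_mem, ← himg]
    exact Ideal.mem_map_of_mem _ ha
  set F : Mlam k lam →+* Rhat k ⧸ N :=
    Ideal.Quotient.lift (lamIdeal k lam)
      ((Ideal.Quotient.mk N).comp (Ideal.Quotient.mk (nodalIdeal k))) hker with hFdef
  set φ : Rhat k →+* Mlam k lam :=
    Ideal.Quotient.factor (S := nodalIdeal k) (T := lamIdeal k lam)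
      (nodalIdeal_le_lamIdeal k lam hlam1) with hφdef
  have hφker : ∀ r ∈ N, φ r = 0 := by
    intro r hr
    have hle : N ≤ RingHom.ker φ := by
      rw [hNdef, Ideal.span_le, Set.singleton_subset_iff, SetLike.mem_coe, RingHom.mem_ker,
        hφdef, Ideal.Quotient.factor_mk, Ideal.Quotient.eq_zero_iff_mem]
      exact hfJ
    exact hle hr
  set G : Rhat k ⧸ N →+* Mlam k lam := Ideal.Quotient.lift N φ hφker with hGdef
  refine ⟨{ toFun := F, map_add' := map_add F, map_smul' := ?_, invFun := G,
            left_inv := ?_, right_inv := ?_ }⟩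
  · intro r m
    obtain ⟨b, rfl⟩ := Ideal.Quotient.mk_surjective r
    obtain ⟨a, rfl⟩ := Ideal.Quotient.mk_surjective m
    rfl
  · intro m
    obtain ⟨a, rfl⟩ := Ideal.Quotient.mk_surjective m
    simp only [hFdef, Ideal.Quotient.lift_mk, RingHom.comp_apply, hGdef, hφdef,
      Ideal.Quotient.factor_mk]
  · intro q
    obtain ⟨r, rfl⟩ := Ideal.Quotient.mk_surjective q
    obtain ⟨b, rfl⟩ := Ideal.Quotient.mk_surjective r
    simp only [hGdef, Ideal.Quotient.lift_mk, hφdef, Ideal.Quotient.factor_mk, hFdef,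
      RingHom.comp_apply]
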